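/- arXiv:2212.14431 — 2 statements merged into one kernel-verified Lean document; each statement's English description precedes it below -/
import Mathlib

section
/- Piecewise-linear-concave structure of EPFs: in a finite two-player perfect-information game tree, the Enforceable Payoff Frontier U_s of every state s, defined by backward induction as U_s(μ) = ⋀_{s'∈C(s)} U_{s'} for leader states and U_s(μ) = ⋀_{s'∈C(s)} (U_{s'} ▷ τ(s')) for follower states (with leaves having the degenerate EPF that takes value r₁(ℓ) at r₂(ℓ) and -∞ elsewhere), is piecewise linear and concave on its domain, with a number of knots no greater than the number of leaves of the subtree rooted at s. -/
/-- A finite two-player perfect-information game tree: leaves carry payoffs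
`(r₁, r₂)`; internal nodes belong to the leader (`isLeader = true`) or the
follower, and have a nonempty (finite) family of children. -/
inductive GTree : Type
  | leaf (r₁ r₂ : ℝ) : GTree
  | node (isLeader : Bool) (n : ℕ) (children : Fin (n + 1) → GTree) : GTree

/-- Follower's backward-induction value against the grim (follower-payoff-minimizing)
leader strategy. -/
noncomputable def GTree.grim : GTree → ℝ
  | .leaf _ r₂ => r₂
  | .node isLeader _ c =>
      if isLeader then
        Finset.univ.inf' Finset.univ_nonempty (fun i => (c i).grim)
      else
        Finset.univ.sup' Finset.univ_nonempty (fun i => (c i).grim)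

/-- Follower's backward-induction value under the joint altruistic
(follower-payoff-maximizing) strategy profile. -/
noncomputable def GTree.alt : GTree → ℝ
  | .leaf _ r₂ => r₂
  | .node _ _ c => Finset.univ.sup' Finset.univ_nonempty (fun i => (c i).alt)

def ConcaveE (g : ℝ → EReal) : Prop :=
  ∀ x y t : ℝ, 0 ≤ t → t ≤ 1 →
    (t : EReal) * g x + ((1 - t : ℝ) : EReal) * g y ≤ g (t * x + (1 - t) * y)

/-- Upper concave envelope of an extended-real-valued function. -/
noncomputable def concE (f : ℝ → EReal) : ℝ → EReal :=
  fun μ => ⨅ h : {h : ℝ → EReal // ConcaveE h ∧ ∀ x, f x ≤ h x}, (h : ℝ → EReal) μ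

/-- Left truncation at an extended-real threshold. -/
noncomputable def truncE' (g : ℝ → EReal) (t : EReal) : ℝ → EReal :=
  fun μ => if t ≤ (μ : EReal) then g μ else ⊥

/-- Minimum required incentive of the child `i` among the family `c`:
the maximum grim value over the *other* children (`⊥` if there are none). -/
noncomputable def tauOf {n : ℕ} (c : Fin (n + 1) → GTree) (i : Fin (n + 1)) : EReal :=
  ⨆ (j : Fin (n + 1)) (_ : j ≠ i), ((c j).grim : EReal)

/-- The Enforceable Payoff Frontier (EPF), defined by backward induction:
degenerate at leaves; upper concave envelope of the children's EPFs at leader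
nodes; upper concave envelope of the left-truncated children's EPFs at follower
nodes. -/
noncomputable def GTree.epf : GTree → ℝ → EReal
  | .leaf r₁ r₂ => fun μ => if μ = r₂ then (r₁ : EReal) else ⊥
  | .node isLeader _ c =>
      if isLeader then
        concE (fun μ => ⨆ i, (c i).epf μ)
      else
        concE (fun μ => ⨆ i, truncE' ((c i).epf) (tauOf c i) μ)

/-- Number of leaves of the subtree. -/
def GTree.numLeaves : GTree → ℕ
  | .leaf _ _ => 1
  | .node _ _ c => ∑ i, (c i).numLeaves

/-- The extended-real-valued function supported on a finite set of points:
value `p.2` at the x-coordinate `p.1` of each point, `⊥` elsewhere. -/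
noncomputable def pointFun (P : Finset (ℝ × ℝ)) : ℝ → EReal :=
  fun μ => ⨆ (p : ℝ × ℝ) (_ : p ∈ P) (_ : μ = p.1), ((p.2 : ℝ) : EReal)


lemma concaveE_top : ConcaveE (fun _ => (⊤ : EReal)) := fun _ _ _ _ _ => le_top

instance (f : ℝ → EReal) : Nonempty {h : ℝ → EReal // ConcaveE h ∧ ∀ x, f x ≤ h x} :=
  ⟨⟨fun _ => ⊤, concaveE_top, fun _ => le_top⟩⟩

lemma le_concE (f : ℝ → EReal) (x : ℝ) : f x ≤ concE f x :=
  le_iInf fun h => h.2.2 x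

lemma concE_le {f h : ℝ → EReal} (hc : ConcaveE h) (hf : ∀ x, f x ≤ h x) (x : ℝ) :
    concE f x ≤ h x :=
  iInf_le (fun h' : {h : ℝ → EReal // ConcaveE h ∧ ∀ x, f x ≤ h x} => (h' : ℝ → EReal) x)
    ⟨h, hc, hf⟩

lemma mul_mono {c : ℝ} (hc : 0 ≤ c) {A B : EReal} (h : A ≤ B) :
    (c : EReal) * A ≤ (c : EReal) * B :=
  mul_le_mul_of_nonneg_left h (by exact_mod_cast hc)

lemma concaveE_concE (f : ℝ → EReal) : ConcaveE (concE f) := by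
  intro x y t ht ht1
  refine le_iInf fun h => ?_
  calc (t : EReal) * concE f x + ((1 - t : ℝ) : EReal) * concE f y
      ≤ (t : EReal) * (h : ℝ → EReal) x + ((1 - t : ℝ) : EReal) * (h : ℝ → EReal) y :=
        add_le_add (mul_mono ht (iInf_le _ h)) (mul_mono (by linarith) (iInf_le _ h))
    _ ≤ _ := h.2.1 x y t ht ht1

lemma concE_le_concE {f g : ℝ → EReal} (hfg : ∀ x, f x ≤ concE g x) (x : ℝ) :
    concE f x ≤ concE g x :=
  concE_le (concaveE_concE g) hfg x

lemma concE_mono {f g : ℝ → EReal} (h : ∀ x, f x ≤ g x) (x : ℝ) :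
    concE f x ≤ concE g x :=
  concE_le_concE (fun y => (h y).trans (le_concE g y)) x

lemma concE_eq {f g : ℝ → EReal} (h1 : ∀ x, f x ≤ concE g x) (h2 : ∀ x, g x ≤ concE f x) :
    concE f = concE g :=
  funext fun x => le_antisymm (concE_le_concE h1 x) (concE_le_concE h2 x)

lemma concE_concE (f : ℝ → EReal) : concE (concE f) = concE f :=
  concE_eq (fun x => le_refl _) (fun x => (le_concE f x).trans (le_concE (concE f) x))

lemma concE_iSup_congr {ι : Sort*} {f g : ι → ℝ → EReal}
    (h : ∀ i, concE (f i) = concE (g i)) :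
    concE (fun μ => ⨆ i, f i μ) = concE (fun μ => ⨆ i, g i μ) := by
  have key : ∀ (f g : ι → ℝ → EReal), (∀ i, concE (f i) = concE (g i)) →
      ∀ x, (⨆ i, f i x) ≤ concE (fun μ => ⨆ i, g i μ) x := by
    intro f g h x
    refine iSup_le fun i => ?_
    calc f i x ≤ concE (f i) x := le_concE _ _
      _ = concE (g i) x := by rw [h i]
      _ ≤ concE (fun μ => ⨆ i, g i μ) x := concE_mono (fun y => le_iSup (fun j => g j y) i) x
  exact concE_eq (key f g h) (key g f (fun i => (h i).symm))

lemma le_pointFun {P : Finset (ℝ × ℝ)} {p : ℝ × ℝ} (hp : p ∈ P) :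
    ((p.2 : ℝ) : EReal) ≤ pointFun P p.1 :=
  le_iSup_of_le p (le_iSup_of_le hp (le_iSup_of_le rfl le_rfl))

lemma pointFun_le_iff {P : Finset (ℝ × ℝ)} {h : ℝ → EReal} :
    (∀ x, pointFun P x ≤ h x) ↔ ∀ p ∈ P, ((p.2 : ℝ) : EReal) ≤ h p.1 := by
  constructor
  · intro H p hp
    exact (le_pointFun hp).trans (H p.1)
  · intro H x
    refine iSup_le fun p => iSup_le fun hp => iSup_le fun hx => ?_
    subst hx; exact H p hp

lemma pointFun_empty : pointFun ∅ = fun _ => (⊥ : EReal) := by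
  funext x; simp [pointFun]

lemma concaveE_affine (a b : ℝ) : ConcaveE (fun μ => ((a * μ + b : ℝ) : EReal)) := by
  intro x y t ht ht1
  rw [← EReal.coe_mul, ← EReal.coe_mul, ← EReal.coe_add, EReal.coe_le_coe_iff]
  apply le_of_eq; ring

lemma concaveE_const (b : ℝ) : ConcaveE (fun _ => (b : EReal)) := by
  have := concaveE_affine 0 b
  simpa using this

lemma concaveE_bot : ConcaveE (fun _ => (⊥ : EReal)) := by
  intro x y t ht ht1
  rcases eq_or_lt_of_le ht with rfl | htpos
  · simp
  · rw [EReal.coe_mul_bot_of_pos (by exact_mod_cast htpos)]; simp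

lemma concE_bot : concE (fun _ => (⊥ : EReal)) = fun _ => (⊥ : EReal) := by
  funext x
  exact le_antisymm (concE_le concaveE_bot (fun _ => le_rfl) x) bot_le



lemma ne_top_ne_bot_real {a : EReal} (h1 : a ≠ ⊥) (h2 : a ≠ ⊤) : ∃ r : ℝ, a = (r : EReal) := by
  induction a with
  | bot => exact absurd rfl h1
  | coe r => exact ⟨r, rfl⟩
  | top => exact absurd rfl h2

lemma mul_ne_top' {c : ℝ} (hc : 0 ≤ c) {A : EReal} (hA : A ≠ ⊤) : (c : EReal) * A ≠ ⊤ := by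
  rcases eq_or_lt_of_le hc with rfl | hcpos
  · simp
  · induction A with
    | bot => rw [EReal.coe_mul_bot_of_pos (by exact_mod_cast hcpos)]; simp
    | coe r => rw [← EReal.coe_mul]; exact EReal.coe_ne_top _
    | top => exact absurd rfl hA

lemma mul_add' {c : ℝ} (hc : 0 ≤ c) {A B : EReal} (hA : A ≠ ⊤) (hB : B ≠ ⊤) :
    (c : EReal) * (A + B) = (c : EReal) * A + (c : EReal) * B := by
  rcases eq_or_lt_of_le hc with rfl | hcpos
  · simp
  · have hc' : (0 : EReal) < (c : EReal) := by exact_mod_cast hcpos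
    induction A with
    | bot => rw [EReal.bot_add, EReal.mul_bot_of_pos hc', EReal.bot_add]
    | coe a =>
      induction B with
      | bot => rw [EReal.add_bot, EReal.mul_bot_of_pos hc', EReal.add_bot]
      | coe b => rw [← EReal.coe_add, ← EReal.coe_mul, ← EReal.coe_mul, ← EReal.coe_mul,
          ← EReal.coe_add, mul_add]
      | top => exact absurd rfl hB
    | top => exact absurd rfl hA

lemma smul_smul' (c₁ c₂ : ℝ) (A : EReal) :
    (c₁ : EReal) * ((c₂ : EReal) * A) = ((c₁ * c₂ : ℝ) : EReal) * A := by
  rw [EReal.coe_mul, mul_assoc]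

lemma add_smul' {c₁ c₂ : ℝ} (h1 : 0 ≤ c₁) (h2 : 0 ≤ c₂) (A : EReal) :
    ((c₁ + c₂ : ℝ) : EReal) * A = (c₁ : EReal) * A + (c₂ : EReal) * A := by
  rw [EReal.coe_add]
  exact EReal.right_distrib_of_nonneg (by exact_mod_cast h1) (by exact_mod_cast h2)

lemma concaveE_leaf (r₁ r₂ : ℝ) :
    ConcaveE (fun μ => if μ = r₂ then (r₁ : EReal) else ⊥) := by
  intro x y t ht ht1
  rcases eq_or_lt_of_le ht with rfl | htpos
  · simp
  rcases eq_or_lt_of_le ht1 with rfl | htlt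
  · norm_num
  by_cases hx : x = r₂ <;> by_cases hy : y = r₂
  · have hcombo : t * x + (1 - t) * y = r₂ := by rw [hx, hy]; ring
    simp only [hx, hy, if_true]
    rw [if_pos (show t * r₂ + (1 - t) * r₂ = r₂ by ring)]
    rw [← EReal.coe_mul, ← EReal.coe_mul, ← EReal.coe_add]
    apply EReal.coe_le_coe_iff.2; apply le_of_eq; ring
  · simp only [if_neg hy]
    rw [EReal.coe_mul_bot_of_pos (by exact_mod_cast (by linarith : (0:ℝ) < 1 - t)), EReal.add_bot]
    exact bot_le
  · simp only [if_neg hx]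
    rw [EReal.coe_mul_bot_of_pos (by exact_mod_cast htpos), EReal.bot_add]
    exact bot_le
  · simp only [if_neg hx]
    rw [EReal.coe_mul_bot_of_pos (by exact_mod_cast htpos), EReal.bot_add]
    exact bot_le

lemma pointFun_singleton (a b : ℝ) :
    pointFun {(a, b)} = fun μ => if μ = a then (b : EReal) else ⊥ := by
  funext μ
  apply le_antisymm
  · refine iSup_le fun p => iSup_le fun hp => iSup_le fun hx => ?_
    simp only [Finset.mem_singleton] at hp
    subst hp; subst hx; simp
  · by_cases hμ : μ = a
    · subst hμ
      simp only [if_pos rfl]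
      exact le_pointFun (p := (μ, b)) (Finset.mem_singleton_self _)
    · simp [hμ]

lemma concE_pointFun_ne_top (P : Finset (ℝ × ℝ)) (x : ℝ) : concE (pointFun P) x ≠ ⊤ := by
  rcases P.eq_empty_or_nonempty with rfl | hne
  · rw [pointFun_empty, concE_bot]; simp
  · have hb := concE_le (concaveE_const (P.sup' hne (fun p => p.2)))
      (pointFun_le_iff.2 fun p hp => EReal.coe_le_coe_iff.2 (Finset.le_sup' _ hp)) x
    exact ne_top_of_le_ne_top (EReal.coe_ne_top _) hb

lemma concE_pointFun_eq_bot_of_lt (P : Finset (ℝ × ℝ)) {μ : ℝ} (hμ : ∀ p ∈ P, μ < p.1) :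
    concE (pointFun P) μ = ⊥ := by
  have key : ∀ M : ℝ, concE (pointFun P) μ ≤ ((-M : ℝ) : EReal) := by
    intro M
    rcases P.eq_empty_or_nonempty with rfl | hne
    · rw [pointFun_empty, concE_bot]; exact bot_le
    · set K : ℝ := max 0 (P.sup' hne (fun p => (p.2 + M) / (p.1 - μ))) with hK
      have hKmaj : ∀ p ∈ P, ((p.2 : ℝ) : EReal) ≤ ((K * p.1 + (-(K * μ) - M) : ℝ) : EReal) := by
        intro p hp
        apply EReal.coe_le_coe_iff.2
        have h1 : (p.2 + M) / (p.1 - μ) ≤ K := le_max_of_le_right (Finset.le_sup' (fun p => (p.2 + M) / (p.1 - μ)) hp)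
        have h2 : (0 : ℝ) < p.1 - μ := by have := hμ p hp; linarith
        have := (div_le_iff₀ h2).1 h1
        nlinarith
      have := concE_le (concaveE_affine K (-(K * μ) - M)) (pointFun_le_iff.2 hKmaj) μ
      refine this.trans ?_
      apply EReal.coe_le_coe_iff.2
      nlinarith [le_max_left 0 (P.sup' hne (fun p => (p.2 + M) / (p.1 - μ)))]
  set a := concE (pointFun P) μ with ha
  clear_value a
  induction a with
  | bot => rfl
  | coe r =>
    have := EReal.coe_le_coe_iff.1 (key (1 - r))
    linarith
  | top =>
    exact ((EReal.coe_ne_top _) (top_le_iff.1 (key 0))).elim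

lemma support_connected {g : ℝ → EReal} (hg : ConcaveE g) (hgtop : ∀ x, g x ≠ ⊤)
    {a b τ : ℝ} (ha : g a ≠ ⊥) (hb : g b ≠ ⊥) (hab : a ≤ τ) (hτb : τ ≤ b) : g τ ≠ ⊥ := by
  rcases eq_or_lt_of_le (hab.trans hτb) with rfl | hlt
  · have : τ = a := le_antisymm (by linarith) hab
    subst this; exact ha
  · set t : ℝ := (b - τ) / (b - a) with htdef
    have hba : (0 : ℝ) < b - a := by linarith
    have ht0 : 0 ≤ t := div_nonneg (by linarith) (by linarith)
    have ht1 : t ≤ 1 := by rw [div_le_one hba]; linarith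
    have hcombo : t * a + (1 - t) * b = τ := by rw [htdef]; field_simp; ring
    have := hg a b t ht0 ht1
    rw [hcombo] at this
    obtain ⟨ra, hra⟩ := ne_top_ne_bot_real ha (hgtop a)
    obtain ⟨rb, hrb⟩ := ne_top_ne_bot_real hb (hgtop b)
    rw [hra, hrb, ← EReal.coe_mul, ← EReal.coe_mul, ← EReal.coe_add] at this
    intro hbot
    rw [hbot, le_bot_iff] at this
    exact EReal.coe_ne_bot _ this
lemma mixed_step {g G : ℝ → EReal} (hg : ConcaveE g) (hG : ConcaveE G)
    (hGg : ∀ x, G x ≤ g x) (hgtop : ∀ x, g x ≠ ⊤)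
    {t v : ℝ} (hgt : g t = (v : EReal)) (hGt : (v : EReal) ≤ G t)
    {x y s : ℝ} (hs : 0 ≤ s) (hs1 : s ≤ 1)
    (hx : t ≤ x) (hy : y < t) (hcombo : t ≤ s * x + (1 - s) * y) :
    (s : EReal) * G x + ((1 - s : ℝ) : EReal) * g y ≤ G (s * x + (1 - s) * y) := by
  rcases eq_or_lt_of_le hs1 with rfl | hslt
  · norm_num
  rcases eq_or_lt_of_le hs with rfl | hs0
  · exfalso; norm_num at hcombo; linarith
  have hxy : y < x := lt_of_lt_of_le hy hx
  have htx : t < x := by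
    rcases eq_or_lt_of_le hx with rfl | h
    · exfalso; nlinarith
    · exact h
  set c := s * x + (1 - s) * y with hcdef
  have hcx : c ≤ x := by rw [hcdef]; nlinarith
  set m := (t - y) / (x - y) with hmdef
  have hm0 : 0 ≤ m := div_nonneg (by linarith) (by linarith)
  have hm1 : m ≤ 1 := by rw [hmdef, div_le_one (by linarith)]; linarith
  have htm : m * x + (1 - m) * y = t := by
    rw [hmdef]; field_simp [sub_ne_zero.mpr hxy.ne']; ring
  have step1 : (m : EReal) * g x + ((1 - m : ℝ) : EReal) * g y ≤ (v : EReal) := by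
    have := hg x y m hm0 hm1
    rwa [htm, hgt] at this
  set θ := (c - t) / (x - t) with hθdef
  have hθ0 : 0 ≤ θ := div_nonneg (by linarith) (by linarith)
  have hθ1 : θ ≤ 1 := by rw [hθdef, div_le_one (by linarith)]; linarith
  have hco : θ * x + (1 - θ) * t = c := by
    rw [hθdef]; field_simp [sub_ne_zero.mpr htx.ne']; ring
  have step2 : (θ : EReal) * G x + ((1 - θ : ℝ) : EReal) * G t ≤ G c := by
    have := hG x t θ hθ0 hθ1
    rwa [hco] at this
  have chain : (θ : EReal) * G x +
      ((1 - θ : ℝ) : EReal) * ((m : EReal) * g x + ((1 - m : ℝ) : EReal) * g y) ≤ G c :=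
    le_trans (add_le_add le_rfl (mul_mono (by linarith) (step1.trans hGt))) step2
  rw [mul_add' (by linarith : (0:ℝ) ≤ 1 - θ) (mul_ne_top' hm0 (hgtop x))
        (mul_ne_top' (by linarith : (0:ℝ) ≤ 1 - m) (hgtop y)),
      smul_smul', smul_smul'] at chain
  have hnn : 0 ≤ (1 - θ) * m := mul_nonneg (by linarith) hm0
  have hid1 : (1 - θ) * (1 - m) = 1 - s := by
    rw [hθdef, hmdef, hcdef]
    field_simp [sub_ne_zero.mpr hxy.ne', sub_ne_zero.mpr htx.ne']
    ring
  have hid2 : θ + (1 - θ) * m = s := by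
    rw [hθdef, hmdef, hcdef]
    field_simp [sub_ne_zero.mpr hxy.ne', sub_ne_zero.mpr htx.ne']
    ring
  calc (s : EReal) * G x + ((1 - s : ℝ) : EReal) * g y
      = ((θ : EReal) * G x + (((1 - θ) * m : ℝ) : EReal) * G x)
          + ((1 - s : ℝ) : EReal) * g y := by
        rw [← add_smul' hθ0 hnn, hid2]
    _ ≤ ((θ : EReal) * G x + (((1 - θ) * m : ℝ) : EReal) * g x)
          + ((1 - s : ℝ) : EReal) * g y :=
        add_le_add (add_le_add le_rfl (mul_mono hnn (hGg x))) le_rfl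
    _ = (θ : EReal) * G x + ((((1 - θ) * m : ℝ) : EReal) * g x
          + (((1 - θ) * (1 - m) : ℝ) : EReal) * g y) := by
        rw [hid1, add_assoc]
    _ ≤ G c := chain

lemma glue_concave {g G : ℝ → EReal} (hg : ConcaveE g) (hG : ConcaveE G)
    (hGg : ∀ x, G x ≤ g x) (hgtop : ∀ x, g x ≠ ⊤) {t v : ℝ}
    (hgt : g t = (v : EReal)) (hGt : (v : EReal) ≤ G t) :
    ConcaveE (fun μ => if t ≤ μ then G μ else g μ) := by
  have hHle : ∀ x, (if t ≤ x then G x else g x) ≤ g x := by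
    intro x; by_cases h : t ≤ x
    · rw [if_pos h]; exact hGg x
    · rw [if_neg h]
  intro x y s hs hs1
  show (s : EReal) * (if t ≤ x then G x else g x)
      + ((1 - s : ℝ) : EReal) * (if t ≤ y then G y else g y)
      ≤ if t ≤ s * x + (1 - s) * y then G (s * x + (1 - s) * y) else g (s * x + (1 - s) * y)
  by_cases hc : t ≤ s * x + (1 - s) * y
  · rw [if_pos hc]
    by_cases hx : t ≤ x <;> by_cases hy : t ≤ y
    · rw [if_pos hx, if_pos hy]
      exact hG x y s hs hs1
    · rw [if_pos hx, if_neg hy]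
      exact mixed_step hg hG hGg hgtop hgt hGt hs hs1 hx (not_le.1 hy) hc
    · rw [if_neg hx, if_pos hy]
      have h2 : s * x + (1 - s) * y = (1 - s) * y + (1 - (1 - s)) * x := by ring
      have hc2 : t ≤ (1 - s) * y + (1 - (1 - s)) * x := h2 ▸ hc
      have := mixed_step hg hG hGg hgtop hgt hGt (by linarith) (by linarith) hy
        (not_le.1 hx) hc2
      rw [← h2] at this
      have h3 : (1 : ℝ) - (1 - s) = s := by ring
      rw [h3] at this
      exact le_trans (le_of_eq (add_comm _ _)) this
    · exfalso
      have hx' := not_le.1 hx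
      have hy' := not_le.1 hy
      rcases eq_or_lt_of_le hs with rfl | hs0
      · norm_num at hc; linarith
      · nlinarith [mul_pos hs0 (sub_pos.mpr hx'),
          mul_nonneg (by linarith : (0:ℝ) ≤ 1 - s) (sub_pos.mpr hy').le]
  · rw [if_neg hc]
    calc (s : EReal) * (if t ≤ x then G x else g x)
        + ((1 - s : ℝ) : EReal) * (if t ≤ y then G y else g y)
        ≤ (s : EReal) * g x + ((1 - s : ℝ) : EReal) * g y :=
          add_le_add (mul_mono hs (hHle x)) (mul_mono (by linarith) (hHle y))
      _ ≤ g (s * x + (1 - s) * y) := hg x y s hs hs1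

lemma trunc_main (P : Finset (ℝ × ℝ)) (τ : EReal) :
    ∃ Q : Finset (ℝ × ℝ), Q.card ≤ P.card ∧
      concE (truncE' (concE (pointFun P)) τ) = concE (pointFun Q) := by
  set g := concE (pointFun P) with hgdef
  have hgconc : ConcaveE g := concaveE_concE _
  have hgtop : ∀ x, g x ≠ ⊤ := concE_pointFun_ne_top P
  have hgP : ∀ x, pointFun P x ≤ g x := le_concE _
  -- helper: if g vanishes strictly below a real t, truncation at t does nothing
  have huntouched : ∀ t : ℝ, (∀ μ : ℝ, μ < t → g μ = ⊥) →
      truncE' g (t : EReal) = g := by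
    intro t hleft
    funext μ
    by_cases h : (t : EReal) ≤ (μ : EReal)
    · exact if_pos h
    · show (if (t : EReal) ≤ (μ : EReal) then g μ else ⊥) = g μ
      rw [if_neg h, (hleft μ (by exact_mod_cast not_le.1 h))]
  induction τ with
  | bot =>
    refine ⟨P, le_rfl, ?_⟩
    have : truncE' g ⊥ = g := funext fun μ => if_pos bot_le
    rw [this, hgdef, concE_concE]
  | top =>
    refine ⟨∅, Nat.zero_le _, ?_⟩
    have : truncE' g ⊤ = fun _ => (⊥ : EReal) := by
      funext μ
      exact if_neg (by simp)
    rw [this, pointFun_empty]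
  | coe t =>
    by_cases hbot : g t = ⊥
    · by_cases hright : ∃ b : ℝ, t ≤ b ∧ g b ≠ ⊥
      · obtain ⟨b, hb1, hb2⟩ := hright
        have hleft : ∀ μ : ℝ, μ < t → g μ = ⊥ := by
          intro μ hμ
          by_contra hne
          exact (support_connected hgconc hgtop hne hb2 hμ.le hb1) hbot
        refine ⟨P, le_rfl, ?_⟩
        rw [huntouched t hleft, hgdef, concE_concE]
      · push_neg at hright
        refine ⟨∅, Nat.zero_le _, ?_⟩
        have : truncE' g (t : EReal) = fun _ => (⊥ : EReal) := by
          funext μ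
          by_cases h : (t : EReal) ≤ (μ : EReal)
          · show (if (t : EReal) ≤ (μ : EReal) then g μ else ⊥) = ⊥
            rw [if_pos h]
            exact hright μ (by exact_mod_cast h)
          · exact if_neg h
        rw [this, pointFun_empty]
    · obtain ⟨v, hv⟩ := ne_top_ne_bot_real hbot (hgtop t)
      by_cases hall : ∀ p ∈ P, t ≤ p.1
      · have hleft : ∀ μ : ℝ, μ < t → g μ = ⊥ := fun μ hμ => by
          rw [hgdef]
          exact concE_pointFun_eq_bot_of_lt P (fun p hp => lt_of_lt_of_le hμ (hall p hp))
        refine ⟨P, le_rfl, ?_⟩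
        rw [huntouched t hleft, hgdef, concE_concE]
      · push_neg at hall
        obtain ⟨p₀, hp₀, hp₀lt⟩ := hall
        refine ⟨P.filter (fun p => t ≤ p.1) ∪ {(t, v)}, ?_, ?_⟩
        · have h1 : (P.filter (fun p => t ≤ p.1)).card < P.card := by
            refine Finset.card_lt_card ⟨Finset.filter_subset _ _, fun hsub => ?_⟩
            have := Finset.mem_filter.1 (hsub hp₀)
            exact absurd this.2 (not_le.2 hp₀lt)
          calc (P.filter (fun p => t ≤ p.1) ∪ {(t, v)}).card
              ≤ (P.filter (fun p => t ≤ p.1)).card + 1 := by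
                refine (Finset.card_union_le _ _).trans ?_
                simp
            _ ≤ P.card := h1
        · set Q := P.filter (fun p => t ≤ p.1) ∪ {(t, v)} with hQdef
          have hQg : ∀ x, pointFun Q x ≤ g x := by
            refine pointFun_le_iff.2 fun p hp => ?_
            rcases Finset.mem_union.1 hp with hp | hp
            · exact (le_pointFun (Finset.mem_of_mem_filter p hp)).trans (hgP p.1)
            · rw [Finset.mem_singleton] at hp
              subst hp
              rw [hv]
          set G := concE (pointFun Q) with hGdef
          have hGconc : ConcaveE G := concaveE_concE _
          have hGg : ∀ x, G x ≤ g x := fun x => concE_le hgconc hQg x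
          have hGt : (v : EReal) ≤ G t := by
            refine le_trans ?_ (le_concE (pointFun Q) t)
            exact le_pointFun (p := (t, v))
              (Finset.mem_union_right _ (Finset.mem_singleton_self _))
          have hHconc : ConcaveE (fun μ => if t ≤ μ then G μ else g μ) :=
            glue_concave hgconc hGconc hGg hgtop hv hGt
          have hPH : ∀ x, pointFun P x ≤ (if t ≤ x then G x else g x) := by
            refine pointFun_le_iff.2 fun p hp => ?_
            by_cases h : t ≤ p.1
            · rw [if_pos h]
              exact (le_pointFun (Finset.mem_union_left _
                (Finset.mem_filter.2 ⟨hp, h⟩))).trans (le_concE _ _)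
            · rw [if_neg h]
              exact (le_pointFun hp).trans (hgP _)
          have hgH : ∀ x, g x ≤ (if t ≤ x then G x else g x) := fun x =>
            concE_le hHconc hPH x
          refine concE_eq ?_ ?_
          · intro x
            show (if (t : EReal) ≤ (x : EReal) then g x else ⊥) ≤ G x
            by_cases h : (t : EReal) ≤ (x : EReal)
            · rw [if_pos h]
              have := hgH x
              rwa [if_pos (by exact_mod_cast h)] at this
            · rw [if_neg h]
              exact bot_le
          · intro x
            refine le_trans ?_ (le_concE (truncE' g (t : EReal)) x)
            revert x
            refine pointFun_le_iff.2 fun p hp => ?_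
            rcases Finset.mem_union.1 hp with hp | hp
            · have h := (Finset.mem_filter.1 hp).2
              show _ ≤ if (t : EReal) ≤ (p.1 : EReal) then g p.1 else ⊥
              rw [if_pos (by exact_mod_cast h)]
              exact (le_pointFun (Finset.mem_of_mem_filter p hp)).trans (hgP p.1)
            · rw [Finset.mem_singleton] at hp
              subst hp
              show _ ≤ if (t : EReal) ≤ ((t : ℝ) : EReal) then g t else ⊥
              rw [if_pos le_rfl, hv]

lemma concE_of_concave {f : ℝ → EReal} (hf : ConcaveE f) : concE f = f :=
  funext fun x => le_antisymm (concE_le hf (fun _ => le_rfl) x) (le_concE f x)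

lemma pointFun_biUnion {n : ℕ} (Q : Fin (n + 1) → Finset (ℝ × ℝ)) (x : ℝ) :
    (⨆ i, pointFun (Q i) x) = pointFun (Finset.univ.biUnion Q) x := by
  apply le_antisymm
  · refine iSup_le fun i => iSup_le fun p => iSup_le fun hp => iSup_le fun hx => ?_
    subst hx
    exact le_pointFun (Finset.mem_biUnion.2 ⟨i, Finset.mem_univ i, hp⟩)
  · refine iSup_le fun p => iSup_le fun hp => iSup_le fun hx => ?_
    subst hx
    obtain ⟨i, _, hpi⟩ := Finset.mem_biUnion.1 hp
    exact (le_pointFun hpi).trans (le_iSup (fun j => pointFun (Q j) p.1) i)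

/-- Piecewise-linear-concave structure of EPFs: the EPF of every state is concave
and piecewise linear, being the upper concave envelope of finitely many knot
points, whose number is at most the number of leaves of the subtree. -/
theorem epf_piecewise_linear_concave (T : GTree) :
    ConcaveE T.epf ∧
    ∃ P : Finset (ℝ × ℝ), P.card ≤ T.numLeaves ∧ T.epf = concE (pointFun P) := by
  induction T with
  | leaf r₁ r₂ =>
    have hleaf : GTree.epf (.leaf r₁ r₂) = fun μ => if μ = r₂ then (r₁ : EReal) else ⊥ := rfl
    constructor
    · rw [hleaf]; exact concaveE_leaf r₁ r₂
    · refine ⟨{(r₂, r₁)}, ?_, ?_⟩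
      · simp [GTree.numLeaves]
      · rw [hleaf, pointFun_singleton, concE_of_concave (concaveE_leaf r₁ r₂)]
  | node b n c ih =>
    have hnl : GTree.numLeaves (.node b n c) = ∑ i, (c i).numLeaves := rfl
    choose P hPcard hPeq using fun i => (ih i).2
    cases b with
    | true =>
      have hepf : GTree.epf (.node true n c) = concE (fun μ => ⨆ i, (c i).epf μ) := by
        simp [GTree.epf]
      refine ⟨hepf ▸ concaveE_concE _, Finset.univ.biUnion P, ?_, ?_⟩
      · rw [hnl]
        exact Finset.card_biUnion_le.trans (Finset.sum_le_sum fun i _ => hPcard i)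
      · rw [hepf]
        have h1 : concE (fun μ => ⨆ i, (c i).epf μ)
            = concE (fun μ => ⨆ i, pointFun (P i) μ) :=
          concE_iSup_congr fun i => by rw [hPeq i, concE_concE]
        rw [h1]
        exact congrArg concE (funext (pointFun_biUnion P))
    | false =>
      have hepf : GTree.epf (.node false n c)
          = concE (fun μ => ⨆ i, truncE' ((c i).epf) (tauOf c i) μ) := by
        simp [GTree.epf]
      choose Q hQcard hQeq using fun i => trunc_main (P i) (tauOf c i)
      refine ⟨hepf ▸ concaveE_concE _, Finset.univ.biUnion Q, ?_, ?_⟩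
      · rw [hnl]
        exact Finset.card_biUnion_le.trans
          (Finset.sum_le_sum fun i _ => (hQcard i).trans (hPcard i))
      · rw [hepf]
        have h1 : concE (fun μ => ⨆ i, truncE' ((c i).epf) (tauOf c i) μ)
            = concE (fun μ => ⨆ i, pointFun (Q i) μ) :=
          concE_iSup_congr fun i => by rw [hPeq i]; exact hQeq i
        rw [h1]
        exact congrArg concE (funext (pointFun_biUnion Q))
end

section
/- Two-point representation of the upper concave envelope of finitely many one-dimensional functions at any point: let f₁,…,f_k : ℝ → ℝ ∪ {-∞} be functions each of which is concave with domain a closed interval, and let F = ⋀_i f_i be their upper concave envelope. Then for every μ in Dom[F], there exist indices i, j, weight t ∈ [0,1], and points μ' ∈ Dom[f_i], μ'' ∈ Dom[f_j] with tμ' + (1-t)μ'' = μ and F(μ) = t f_i(μ') + (1-t) f_j(μ''). -/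
/-!
Let `g = max_i f_i`. Concavity bounds each `f_i` below on its interval, upper semicontinuity
bounds it above and makes its hypograph closed, so the hypograph `S` of `g` truncated below is
compact, and so is its convex hull `H`. The upper boundary of `H` is a concave majorant of `g`,
so the envelope at `μ` is at most the top `V` of the fibre of `H` over `μ`. The point `(μ, V)`
is not interior to `H`, so in Carathéodory's theorem in the plane it needs only two points
of `S`; since `S` lies under the graph of `g`, `V` is then bounded by a two-point
combination of values of `g`, which is itself at most the envelope.
-/

open Set Module Filter Topology Function

lemma Function.Embedding.sum_extend_zero {ι κ M : Type*} [Fintype ι] [Fintype κ]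
    [AddCommMonoid M] (e : ι ↪ κ) (g : ι → M) : ∑ j, extend e g 0 j = ∑ i, g i :=
  (Fintype.sum_of_injective e e.injective _ _ (fun j hj => extend_apply' g (0 : κ → M) j hj)
    fun _ => (e.injective.extend_apply _ _ _).symm).symm

section ConvexHull

variable {E : Type*} [AddCommGroup E] [Module ℝ E]

lemma exists_fin_sum_smul_eq {ι : Type*} [Fintype ι] {n : ℕ} (hn : Fintype.card ι ≤ n)
    {s : Set E} {w : ι → ℝ} {z : ι → E} (hw₀ : ∀ i, 0 ≤ w i) (hw₁ : ∑ i, w i = 1)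
    (hz : ∀ i, z i ∈ s) :
    ∃ w' ∈ stdSimplex ℝ (Fin n), ∃ z' : Fin n → E, (∀ j, z' j ∈ s) ∧
      ∑ j, w' j • z' j = ∑ i, w i • z i := by
  classical
  obtain ⟨e⟩ := Embedding.nonempty_of_card_le (hn.trans_eq (Fintype.card_fin n).symm)
  obtain ⟨i₀⟩ : Nonempty ι := by
    by_contra h
    simp [not_nonempty_iff.mp h] at hw₁
  refine ⟨extend e w 0, ⟨fun j => ?_, (e.sum_extend_zero w).trans hw₁⟩,
    extend e z fun _ => z i₀, fun j => ?_, ?_⟩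
  · rw [extend_def]
    split_ifs
    exacts [hw₀ _, le_rfl]
  · rw [extend_def]
    split_ifs <;> apply hz
  · rw [← e.sum_extend_zero]
    congr! 1 with j
    simp only [extend_def]
    split_ifs <;> simp

lemma AffineIndependent.card_le_finrank_add_one [FiniteDimensional ℝ E] {ι : Type*} [Fintype ι]
    {p : ι → E} (hp : AffineIndependent ℝ p) : Fintype.card ι ≤ finrank ℝ E + 1 :=
  hp.card_le_finrank_succ.trans (Nat.add_le_add_right (Submodule.finrank_le _) 1)

variable [TopologicalSpace E] [IsTopologicalAddGroup E] [ContinuousSMul ℝ E]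
  [FiniteDimensional ℝ E]

theorem isCompact_convexHull {s : Set E} (hs : IsCompact s) : IsCompact (convexHull ℝ s) := by
  set n := finrank ℝ E + 1
  have hhull : convexHull ℝ s = (fun p : (Fin n → ℝ) × (Fin n → E) => ∑ j, p.1 j • p.2 j) ''
      (stdSimplex ℝ (Fin n) ×ˢ univ.pi fun _ => s) := by
    refine Subset.antisymm (fun x hx => ?_) ?_
    · obtain ⟨ι, _, z, w, hzs, hind, hw₀, hw₁, rfl⟩ := eq_pos_convex_span_of_mem_convexHull hx
      obtain ⟨w', hw', z', hz', hsum⟩ := exists_fin_sum_smul_eq hind.card_le_finrank_add_one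
        (fun i => (hw₀ i).le) hw₁ fun i => hzs (mem_range_self i)
      exact ⟨(w', z'), ⟨hw', fun j _ => hz' j⟩, hsum⟩
    · rintro _ ⟨⟨w, z⟩, ⟨⟨hw₀, hw₁⟩, hz⟩, rfl⟩
      exact (convex_convexHull ℝ s).sum_mem (fun j _ => hw₀ j) hw₁
        fun j _ => subset_convexHull ℝ s (hz j (mem_univ j))
  rw [hhull]
  exact ((isCompact_stdSimplex ℝ _).prod (isCompact_univ_pi fun _ => hs)).image (by fun_prop)

end ConvexHull

theorem exists_mem_segment_of_notMem_interior_convexHull {E : Type*} [NormedAddCommGroup E]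
    [NormedSpace ℝ E] [FiniteDimensional ℝ E] (hE : finrank ℝ E = 2) {s : Set E} {x : E}
    (hx : x ∈ convexHull ℝ s) (hint : x ∉ interior (convexHull ℝ s)) :
    ∃ u ∈ s, ∃ v ∈ s, x ∈ segment ℝ u v := by
  obtain ⟨ι, _, z, w, hzs, hind, hw₀, hw₁, rfl⟩ := eq_pos_convex_span_of_mem_convexHull hx
  rcases hind.card_le_finrank_add_one.lt_or_eq with hlt | hcard
  · obtain ⟨w', ⟨hw'₀, hw'₁⟩, z', hz', hsum⟩ := exists_fin_sum_smul_eq (n := 2) (by omega)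
      (fun i => (hw₀ i).le) hw₁ fun i => hzs (mem_range_self i)
    rw [Fin.sum_univ_two] at hw'₁ hsum
    exact ⟨z' 0, hz' 0, z' 1, hz' 1, w' 0, w' 1, hw'₀ 0, hw'₀ 1, hw'₁, hsum⟩
  -- Three affinely independent points of the plane form an affine basis, and a combination
  -- of them with positive weights is interior to their hull.
  · let b : AffineBasis ι ℝ E :=
      ⟨z, hind, hind.affineSpan_eq_top_iff_card_eq_finrank_add_one.2 hcard⟩
    refine absurd (interior_mono (convexHull_mono hzs) ?_) hint
    rw [← Finset.affineCombination_eq_linear_combination _ _ _ hw₁]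
    change _ ∈ interior (convexHull ℝ (range b))
    rw [b.interior_convexHull]
    exact fun i => (b.coord_apply_combination_of_mem (Finset.mem_univ i) hw₁).symm ▸ hw₀ i

section Semicontinuity

variable {α : Type*} [TopologicalSpace α]

lemma upperSemicontinuous_iSup_of_fintype {ι γ : Type*} [Fintype ι] [CompleteLinearOrder γ]
    [TopologicalSpace γ] [OrderTopology γ] {f : ι → α → γ}
    (hf : ∀ i, UpperSemicontinuous (f i)) : UpperSemicontinuous fun x => ⨆ i, f i x := by
  have : (fun x => ⨆ i, f i x) = Finset.univ.sup f := by
    ext x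
    simp [Finset.sup_apply, Finset.sup_univ_eq_iSup]
  rw [this]
  exact Finset.sup_induction upperSemicontinuous_const (fun _ h₁ _ h₂ => h₁.sup h₂)
    fun i _ => hf i

lemma UpperSemicontinuous.exists_le_coe {g : α → EReal} (hg : UpperSemicontinuous g)
    (htop : ∀ x, g x ≠ ⊤) (hdom : IsCompact {x | g x ≠ ⊥}) : ∃ M : ℝ, ∀ x, g x ≤ M := by
  rcases {x | g x ≠ ⊥}.eq_empty_or_nonempty with hempty | hne
  · exact ⟨0, fun x => by simp [not_not.1 (eq_empty_iff_forall_notMem.1 hempty x)]⟩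
  obtain ⟨x₀, hx₀, hmax⟩ := (hg.upperSemicontinuousOn _).exists_isMaxOn hne hdom
  refine ⟨(g x₀).toReal, fun x => ?_⟩
  rw [EReal.coe_toReal (htop x₀) hx₀]
  by_cases hx : g x = ⊥
  · simp [hx]
  · exact hmax hx

end Semicontinuity

lemma exists_eq_iSup_of_ne_bot {ι α : Type*} [Finite ι] [CompleteLinearOrder α] {f : ι → α}
    (h : ⨆ i, f i ≠ ⊥) : ∃ i, f i = ⨆ i, f i := by
  have : Nonempty ι := by
    by_contra hι
    simp [not_nonempty_iff.1 hι] at h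
  exact exists_eq_ciSup_of_finite

lemma exists_forall_coe_le_iSup {ι α : Type*} [Finite ι] {f : ι → α → EReal} {c : ι → ℝ}
    (hc : ∀ i x, f i x ≠ ⊥ → (c i : EReal) ≤ f i x) :
    ∃ c₀ : ℝ, ∀ x, ⨆ i, f i x ≠ ⊥ → (c₀ : EReal) ≤ ⨆ i, f i x := by
  obtain ⟨c₀, hc₀⟩ := Finite.bddBelow_range c
  refine ⟨c₀, fun x hx => ?_⟩
  obtain ⟨i, hi⟩ := exists_eq_iSup_of_ne_bot hx
  calc (c₀ : EReal) ≤ c i := EReal.coe_le_coe_iff.2 (hc₀ ⟨i, rfl⟩)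
    _ ≤ f i x := hc i x (hi ▸ hx)
    _ = ⨆ i, f i x := hi

lemma ConcaveE.exists_le_of_eq_Icc {g : ℝ → EReal} (hg : ConcaveE g) (htop : ∀ x, g x ≠ ⊤)
    {a b : ℝ} (hab : a ≤ b) (hdom : {x | g x ≠ ⊥} = Icc a b) :
    ∃ c : ℝ, ∀ x, g x ≠ ⊥ → (c : EReal) ≤ g x := by
  have hreal : ∀ x ∈ Icc a b, ((g x).toReal : EReal) = g x := fun x hx =>
    EReal.coe_toReal (htop x) (hdom ▸ hx : x ∈ {x | g x ≠ ⊥})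
  refine ⟨min (g a).toReal (g b).toReal, fun x hx => ?_⟩
  obtain ⟨t, s, ht, hs, hts, rfl⟩ := (segment_eq_Icc hab).symm ▸ (hdom ▸ hx : x ∈ Icc a b)
  obtain rfl : s = 1 - t := by linarith
  calc ((min (g a).toReal (g b).toReal : ℝ) : EReal)
      ≤ ((t * (g a).toReal + (1 - t) * (g b).toReal : ℝ) : EReal) := by
        gcongr
        nlinarith [min_le_left (g a).toReal (g b).toReal, min_le_right (g a).toReal (g b).toReal]
    _ = (t : EReal) * g a + ((1 - t : ℝ) : EReal) * g b := by
        rw [← hreal a ⟨le_rfl, hab⟩, ← hreal b ⟨hab, le_rfl⟩]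
        norm_cast
    _ ≤ g (t • a + (1 - t) • b) := hg a b t ht (by linarith)

lemma isCompact_truncated_hypograph {g : ℝ → EReal} (hg : UpperSemicontinuous g)
    (htop : ∀ x, g x ≠ ⊤) (hdom : IsCompact {x | g x ≠ ⊥}) (c : ℝ) :
    IsCompact {p : ℝ × ℝ | c ≤ p.2 ∧ (p.2 : EReal) ≤ g p.1} := by
  obtain ⟨M, hM⟩ := hg.exists_le_coe htop hdom
  refine (hdom.prod (isCompact_Icc (a := c) (b := M))).of_isClosed_subset ?_ ?_
  · exact (isClosed_le continuous_const continuous_snd).inter <| hg.IsClosed_hypograph.preimage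
      (continuous_fst.prodMk (continuous_coe_real_ereal.comp continuous_snd))
  · rintro ⟨x, v⟩ ⟨hcv, hvg⟩
    exact ⟨ne_bot_of_le_ne_bot (EReal.coe_ne_bot v) hvg, hcv,
      EReal.coe_le_coe_iff.1 (hvg.trans (hM x))⟩

noncomputable def upperBoundary (H : Set (ℝ × ℝ)) (x : ℝ) : EReal :=
  ⨆ v ∈ Prod.mk x ⁻¹' H, (v : EReal)

section UpperBoundary

variable {H : Set (ℝ × ℝ)} {x v : ℝ}

lemma le_upperBoundary (h : (x, v) ∈ H) : (v : EReal) ≤ upperBoundary H x :=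
  le_iSup₂ (f := fun v (_ : v ∈ Prod.mk x ⁻¹' H) => (v : EReal)) v h

lemma upperBoundary_eq_bot (h : Prod.mk x ⁻¹' H = ∅) : upperBoundary H x = ⊥ := by
  simp [upperBoundary, h]

lemma upperBoundary_eq_of_isGreatest (h : IsGreatest (Prod.mk x ⁻¹' H) v) :
    upperBoundary H x = v :=
  le_antisymm (iSup₂_le fun _ hw => EReal.coe_le_coe_iff.2 (h.2 hw)) (le_upperBoundary h.1)

lemma IsCompact.exists_isGreatest_preimage_mk (hH : IsCompact H)
    (hne : (Prod.mk x ⁻¹' H).Nonempty) : ∃ V, IsGreatest (Prod.mk x ⁻¹' H) V :=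
  ((hH.image continuous_snd).of_isClosed_subset (hH.isClosed.preimage (Continuous.prodMk_right x))
    fun _ hv => ⟨_, hv, rfl⟩).exists_isGreatest hne

lemma concaveE_upperBoundary (hconv : Convex ℝ H) (hcpt : IsCompact H) :
    ConcaveE (upperBoundary H) := by
  intro x y t ht₀ ht₁
  rcases ht₀.eq_or_lt with rfl | ht₀
  · simp
  rcases ht₁.eq_or_lt with rfl | ht₁
  · simp
  rcases (Prod.mk x ⁻¹' H).eq_empty_or_nonempty with hx | hx
  · rw [upperBoundary_eq_bot hx, EReal.mul_bot_of_pos (by exact_mod_cast ht₀), EReal.bot_add]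
    exact bot_le
  rcases (Prod.mk y ⁻¹' H).eq_empty_or_nonempty with hy | hy
  · rw [upperBoundary_eq_bot hy, EReal.mul_bot_of_pos (by exact_mod_cast sub_pos.2 ht₁),
      EReal.add_bot]
    exact bot_le
  obtain ⟨vx, hvx⟩ := hcpt.exists_isGreatest_preimage_mk hx
  obtain ⟨vy, hvy⟩ := hcpt.exists_isGreatest_preimage_mk hy
  rw [upperBoundary_eq_of_isGreatest hvx, upperBoundary_eq_of_isGreatest hvy]
  have hmem := hconv hvx.1 hvy.1 ht₀.le (sub_nonneg.2 ht₁.le) (add_sub_cancel t 1)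
  simp only [Prod.smul_mk, Prod.mk_add_mk, smul_eq_mul] at hmem
  exact_mod_cast le_upperBoundary hmem

lemma notMem_interior_of_isGreatest (h : IsGreatest (Prod.mk x ⁻¹' H) v) :
    (x, v) ∉ interior H := by
  intro hint
  have hev : ∀ᶠ ε in 𝓝[>] (0 : ℝ), (x, v + ε) ∈ interior H :=
    nhdsWithin_le_nhds <| (Continuous.tendsto (by fun_prop) 0).eventually
      (isOpen_interior.mem_nhds (by simpa using hint))
  obtain ⟨ε, hε, hpos⟩ := (hev.and self_mem_nhdsWithin).exists
  linarith [h.2 (interior_subset hε : (x, v + ε) ∈ H), hpos]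

end UpperBoundary

section Envelope

variable {g : ℝ → EReal}

lemma concE_le_s15 {h : ℝ → EReal} (hh : ConcaveE h) (hgh : g ≤ h) : concE g ≤ h :=
  fun _ => iInf_le_of_le ⟨h, hh, hgh⟩ le_rfl

lemma le_concE_s15 {t : ℝ} (ht₀ : 0 ≤ t) (ht₁ : t ≤ 1) (x y : ℝ) :
    (t : EReal) * g x + ((1 - t : ℝ) : EReal) * g y ≤ concE g (t * x + (1 - t) * y) := by
  refine le_iInf fun ⟨h, hh, hgh⟩ => le_trans ?_ (hh x y t ht₀ ht₁)
  gcongr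
  exacts [hgh x, hgh y]

theorem exists_two_point_eq_concE (hg : UpperSemicontinuous g) (htop : ∀ x, g x ≠ ⊤)
    (hdom : IsCompact {x | g x ≠ ⊥}) {c : ℝ} (hc : ∀ x, g x ≠ ⊥ → (c : EReal) ≤ g x) {μ : ℝ}
    (hμ : concE g μ ≠ ⊥) :
    ∃ t x' x'' : ℝ, 0 ≤ t ∧ t ≤ 1 ∧ g x' ≠ ⊥ ∧ g x'' ≠ ⊥ ∧ t * x' + (1 - t) * x'' = μ ∧
      concE g μ = (t : EReal) * g x' + ((1 - t : ℝ) : EReal) * g x'' := by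
  set S := {p : ℝ × ℝ | c ≤ p.2 ∧ (p.2 : EReal) ≤ g p.1}
  have hH : IsCompact (convexHull ℝ S) :=
    isCompact_convexHull (isCompact_truncated_hypograph hg htop hdom c)
  have hgH : g ≤ upperBoundary (convexHull ℝ S) := fun x => by
    by_cases hx : g x = ⊥
    · simp [hx]
    have hx' := EReal.coe_toReal (htop x) hx
    have hmem : (x, (g x).toReal) ∈ S := ⟨EReal.coe_le_coe_iff.1 (hx' ▸ hc x hx), hx'.le⟩
    exact hx'.symm.le.trans (le_upperBoundary (subset_convexHull ℝ S hmem))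
  have hFG : concE g μ ≤ upperBoundary (convexHull ℝ S) μ :=
    concE_le_s15 (concaveE_upperBoundary (convex_convexHull ℝ S) hH) hgH μ
  obtain ⟨V, hV⟩ := hH.exists_isGreatest_preimage_mk <| nonempty_iff_ne_empty.2 fun h =>
    hμ (le_bot_iff.1 (upperBoundary_eq_bot h ▸ hFG))
  obtain ⟨u, hu, v, hv, t, s, ht, hs, hts, huv⟩ := exists_mem_segment_of_notMem_interior_convexHull
    (by simp) hV.1 (notMem_interior_of_isGreatest hV)
  obtain rfl : s = 1 - t := by linarith
  simp only [Prod.smul_def, smul_eq_mul, Prod.mk_add_mk, Prod.mk.injEq] at huv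
  refine ⟨t, u.1, v.1, ht, by linarith, ne_bot_of_le_ne_bot (EReal.coe_ne_bot _) hu.2,
    ne_bot_of_le_ne_bot (EReal.coe_ne_bot _) hv.2, huv.1,
    le_antisymm ?_ (huv.1 ▸ le_concE_s15 ht (by linarith) _ _)⟩
  calc concE g μ ≤ V := upperBoundary_eq_of_isGreatest hV ▸ hFG
    _ = (t : EReal) * u.2 + ((1 - t : ℝ) : EReal) * v.2 := by
      rw [← huv.2]
      norm_cast
    _ ≤ (t : EReal) * g u.1 + ((1 - t : ℝ) : EReal) * g v.1 := by
      gcongr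
      exacts [hu.2, hv.2]

end Envelope

/-- Two-point representation of the upper concave envelope of finitely many
one-dimensional concave functions with compact interval domains: at every point of
its domain, the envelope value is attained by a convex combination of at most two
points drawn from at most two of the functions. -/
theorem uce_two_point_representation (k : ℕ) (f : Fin k → ℝ → EReal)
    (hconc : ∀ i, ConcaveE (f i))
    (hdom : ∀ i, ∃ a b : ℝ, a ≤ b ∧ {x : ℝ | f i x ≠ ⊥} = Set.Icc a b)
    (hreal : ∀ i x, f i x ≠ ⊤)
    (husc : ∀ i, UpperSemicontinuous (f i)) :
    ∀ μ : ℝ, concE (fun x => ⨆ i, f i x) μ ≠ ⊥ →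
      ∃ (i j : Fin k) (t μ' μ'' : ℝ), 0 ≤ t ∧ t ≤ 1 ∧
        f i μ' ≠ ⊥ ∧ f j μ'' ≠ ⊥ ∧ t * μ' + (1 - t) * μ'' = μ ∧
        concE (fun x => ⨆ i, f i x) μ =
          (t : EReal) * f i μ' + ((1 - t : ℝ) : EReal) * f j μ'' := by
  intro μ hμ
  have hbounds i :
      IsCompact {x | f i x ≠ ⊥} ∧ ∃ c : ℝ, ∀ x, f i x ≠ ⊥ → (c : EReal) ≤ f i x := by
    obtain ⟨a, b, hab, hdomi⟩ := hdom i
    exact ⟨hdomi ▸ isCompact_Icc, (hconc i).exists_le_of_eq_Icc (hreal i) hab hdomi⟩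
  choose hcpt c hc using hbounds
  obtain ⟨c₀, hc₀⟩ := exists_forall_coe_le_iSup hc
  obtain ⟨t, μ', μ'', ht₀, ht₁, hμ', hμ'', hcomb, heq⟩ := exists_two_point_eq_concE
    (upperSemicontinuous_iSup_of_fintype husc) (fun x => iSup_ne_top fun i => hreal i x)
    (by simpa only [ne_eq, iSup_eq_bot, not_forall, ofPred_exists] using isCompact_iUnion hcpt)
    hc₀ hμ
  obtain ⟨i, hi⟩ := exists_eq_iSup_of_ne_bot hμ'
  obtain ⟨j, hj⟩ := exists_eq_iSup_of_ne_bot hμ''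
  exact ⟨i, j, t, μ', μ'', ht₀, ht₁, hi ▸ hμ', hj ▸ hμ'', hcomb, by rw [heq, hi, hj]⟩
end
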